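/- Let k be a commutative ring, R a k-algebra, 𝓑 an abelian k-linear category, and H : ModuleCat R ⥤ 𝓑 a k-linear functor preserving all colimits. Then the k-algebra homomorphism from the algebra of natural endomorphisms of H to End_𝓑(H(R)), given by specializing a natural endomorphism at the object R (the free module of rank one), is injective, and its image equals the centralizer in End_𝓑(H(R)) of the image of the algebra map End_R(R) → End_𝓑(H(R)) induced by H on endomorphisms. -/

import Mathlib

open CategoryTheory

noncomputable section

universe v u w w₂

variable (k : Type u) [CommRing k] (R : Type v) [Ring R] [Algebra k R]

instance moduleCatModuleK (M : ModuleCat.{v} R) : Module k M :=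
  RestrictScalars.module k R M

instance moduleCatIsScalarTowerK (M : ModuleCat.{v} R) : IsScalarTower k R M :=
  RestrictScalars.isScalarTower k R M

instance moduleCatLinearK : CategoryTheory.Linear k (ModuleCat.{v} R) where
  homModule _ _ := ModuleCat.Hom.instModule
  smul_comp := by
    intros
    ext
    dsimp only [ModuleCat.hom_comp, ModuleCat.hom_smul, LinearMap.comp_apply]
    rw [LinearMap.smul_apply, LinearMap.map_smul_of_tower]
    rfl

/-!
A natural endomorphism `η` of `H` is determined by `η_R`: every module is the cokernel of a map
between free modules, and `H` sends free modules to coproducts of copies of `H(R)` and cokernels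
to cokernels. Conversely, an `e` commuting with `H(End R)` extends to each `H(R^(ι))` through the
coproduct property; since every map `R ⟶ R^(ι)` is a finite sum of endomorphisms of `R` followed
by coproduct injections, the extension commutes with `H` of every map between free modules, and
so it descends to cokernels, naturally in `M`.

`H` preserves only colimits indexed by types of the hom-universe `w₂` of `B`. When some
`ι : Type v` is not `w₂`-small this is no restriction: then `H` is zero, since for `H(M) ≠ 0` the
maps `H(M) ⟶ H(M^(ι))` induced by the coproduct injections are pairwise distinct.
-/

open Limits

namespace ModuleCat

variable {R}

def freeCofan (ι : Type v) : Cofan fun _ : ι => of R R :=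
  Cofan.mk (of R (ι →₀ R)) fun i => ofHom (Finsupp.lsingle i)

def isColimitFreeCofan (ι : Type v) : IsColimit (freeCofan (R := R) ι) :=
  Cofan.IsColimit.mk _ (fun s => ofHom (Finsupp.linearCombination R fun i => s.inj i (1 : R)))
    (fun s i => by ext; simp [freeCofan])
    (fun s m hm => by
      ext : 1
      refine Finsupp.lhom_ext' fun i => LinearMap.ext_ring ?_
      refine congr($(hm i) (1 : R)).trans ?_
      change _ = Finsupp.linearCombination R _ (Finsupp.single i 1)
      simp)

lemma hom_eq_sum_single {ι : Type v} (g : of R R ⟶ of R (ι →₀ R)) :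
    g = ∑ i ∈ (g (1 : R)).support,
      ofHom (LinearMap.toSpanSingleton R R (g (1 : R) i)) ≫ ofHom (Finsupp.lsingle i) := by
  ext : 1
  refine LinearMap.ext_ring ?_
  simp only [hom_sum, LinearMap.sum_apply, hom_comp, hom_ofHom, LinearMap.comp_apply,
    LinearMap.toSpanSingleton_apply, one_smul, Finsupp.lsingle_apply]
  exact (Finsupp.sum_single _).symm

abbrev presentation (M : ModuleCat.{v} R) : Module.Presentation.{v, v} R M :=
  Module.Presentation.tautological R M

lemma presentation_map_comp_π (M : ModuleCat.{v} R) :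
    ofHom (presentation M).map ≫ ofHom (presentation M).π = 0 :=
  hom_ext (LinearMap.ext (presentation M).exact.apply_apply_eq_zero)

lemma exists_lift_presentation {M N : ModuleCat.{v} R} (f : M ⟶ N) :
    ∃ φ : of R ((presentation M).G →₀ R) ⟶ of R ((presentation N).G →₀ R),
      φ ≫ ofHom (presentation N).π = ofHom (presentation M).π ≫ f := by
  obtain ⟨φ, hφ⟩ := Module.projective_lifting_property (presentation N).π
    (f.hom ∘ₗ (presentation M).π) (presentation N).surjective_π
  exact ⟨ofHom φ, hom_ext hφ⟩

variable {B : Type w} [Category.{w₂} B] (H : ModuleCat.{v} R ⥤ B)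

section Coproducts

variable [PreservesColimitsOfSize.{v, v} H] (e : End (H.obj (of R R)))

def isColimitMapFreeCofan (ι : Type v) :
    IsColimit (Cofan.mk (H.obj (of R (ι →₀ R))) fun i => H.map (ofHom (Finsupp.lsingle i))) :=
  isColimitCofanMkObjOfIsColimit H _ _ (isColimitFreeCofan ι)

lemma map_free_hom_ext {ι : Type v} {X : B} {f g : H.obj (of R (ι →₀ R)) ⟶ X}
    (h : ∀ i, H.map (ofHom (Finsupp.lsingle i)) ≫ f = H.map (ofHom (Finsupp.lsingle i)) ≫ g) :
    f = g :=
  Cofan.IsColimit.hom_ext (isColimitMapFreeCofan H ι) f g h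

def extendToFree (ι : Type v) : End (H.obj (of R (ι →₀ R))) :=
  Cofan.IsColimit.desc (isColimitMapFreeCofan H ι) fun i => e ≫ H.map (ofHom (Finsupp.lsingle i))

variable {e}

lemma map_single_comp_extendToFree {ι : Type v} (i : ι) :
    H.map (ofHom (Finsupp.lsingle i)) ≫ extendToFree H e ι =
      e ≫ H.map (ofHom (Finsupp.lsingle i)) :=
  Cofan.IsColimit.fac (isColimitMapFreeCofan H ι) _ i

lemma map_comp_eq_extendToFree_comp_map
    (he : ∀ s : End (of R R), H.map s ≫ e = e ≫ H.map s)
    {ι : Type v} (g : of R (ι →₀ R) ⟶ of R R) :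
    H.map g ≫ e = extendToFree H e ι ≫ H.map g :=
  map_free_hom_ext H fun i => by
    rw [← Category.assoc, ← H.map_comp, he, ← Category.assoc, map_single_comp_extendToFree,
      Category.assoc, H.map_comp]

end Coproducts

section ZeroMorphisms

variable [HasZeroMorphisms B] [H.PreservesZeroMorphisms]

lemma isZero_obj_of_not_small {ι : Type v} (hι : ¬ Small.{w₂} ι) (M : ModuleCat.{v} R) :
    IsZero (H.obj M) := by
  let inj (i : ι) : M ⟶ of R (ι →₀ M) := ofHom (Finsupp.lsingle i)
  let proj (i : ι) : of R (ι →₀ M) ⟶ M := ofHom (Finsupp.lapply i)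
  have inj_proj_self (i : ι) : inj i ≫ proj i = 𝟙 M := by ext; simp [inj, proj]
  have inj_proj_of_ne {i j : ι} (h : i ≠ j) : inj i ≫ proj j = 0 := by
    ext; simp [inj, proj, Finsupp.single_eq_of_ne h.symm]
  rw [IsZero.iff_id_eq_zero]
  by_contra hM
  refine hι (small_of_injective (f := fun i => H.map (inj i)) fun i j hij => ?_)
  by_contra hne
  apply hM
  calc 𝟙 (H.obj M) = H.map (inj i) ≫ H.map (proj i) := by
        rw [← H.map_comp, inj_proj_self, H.map_id]
    _ = H.map (inj j) ≫ H.map (proj i) := congr_arg (· ≫ _) hij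
    _ = 0 := by rw [← H.map_comp, inj_proj_of_ne (Ne.symm hne), H.map_zero]

variable [PreservesColimitsOfSize.{v, v} H]

def isColimitMapPresentation (M : ModuleCat.{v} R) :
    IsColimit (CokernelCofork.ofπ (H.map (ofHom (presentation M).π))
      (by rw [← H.map_comp, presentation_map_comp_π, H.map_zero]) :
      CokernelCofork (H.map (ofHom (presentation M).map))) :=
  have := PreservesColimitsOfSize.preservesFiniteColimits H
  CokernelCofork.mapIsColimit _ (isColimitCokernelCofork _ _ (presentation M).exact
    (presentation M).surjective_π) H

lemma map_presentation_hom_ext {M : ModuleCat.{v} R} {X : B} {f g : H.obj M ⟶ X}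
    (h : H.map (ofHom (presentation M).π) ≫ f = H.map (ofHom (presentation M).π) ≫ g) :
    f = g :=
  Cofork.IsColimit.hom_ext (isColimitMapPresentation H M) h

lemma natTrans_ext_of_app_unit {η η' : H ⟶ H} (h : η.app (of R R) = η'.app (of R R)) :
    η = η' := by
  have app_free (ι : Type v) : η.app (of R (ι →₀ R)) = η'.app (of R (ι →₀ R)) :=
    map_free_hom_ext H fun i => by rw [η.naturality, η'.naturality, h]
  ext M
  exact map_presentation_hom_ext H (by rw [η.naturality, η'.naturality, app_free])

end ZeroMorphisms

section Centralizer

variable [Preadditive B] [H.Additive] [PreservesColimitsOfSize.{v, v} H]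
  {e : End (H.obj (of R R))}

lemma map_comp_extendToFree_eq_comp_map (he : ∀ s : End (of R R), H.map s ≫ e = e ≫ H.map s)
    {ι : Type v} (g : of R R ⟶ of R (ι →₀ R)) :
    H.map g ≫ extendToFree H e ι = e ≫ H.map g := by
  rw [hom_eq_sum_single g]
  simp only [H.map_sum, H.map_comp, Preadditive.sum_comp, Preadditive.comp_sum, Category.assoc,
    map_single_comp_extendToFree]
  simp only [← Category.assoc, he]

lemma map_comp_extendToFree (he : ∀ s : End (of R R), H.map s ≫ e = e ≫ H.map s)
    {ι κ : Type v} (g : of R (ι →₀ R) ⟶ of R (κ →₀ R)) :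
    H.map g ≫ extendToFree H e κ = extendToFree H e ι ≫ H.map g :=
  map_free_hom_ext H fun i => by
    rw [← Category.assoc, ← H.map_comp, map_comp_extendToFree_eq_comp_map H he,
      ← Category.assoc, map_single_comp_extendToFree, Category.assoc, H.map_comp]

def extendApp (he : ∀ s : End (of R R), H.map s ≫ e = e ≫ H.map s) (M : ModuleCat.{v} R) :
    End (H.obj M) :=
  Cofork.IsColimit.desc (isColimitMapPresentation H M)
    (extendToFree H e _ ≫ H.map (ofHom (presentation M).π)) (by
      rw [zero_comp, ← Category.assoc, map_comp_extendToFree H he, Category.assoc, ← H.map_comp,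
        presentation_map_comp_π, H.map_zero, comp_zero])

lemma map_π_comp_extendApp (he : ∀ s : End (of R R), H.map s ≫ e = e ≫ H.map s)
    (M : ModuleCat.{v} R) :
    H.map (ofHom (presentation M).π) ≫ extendApp H he M =
      extendToFree H e _ ≫ H.map (ofHom (presentation M).π) :=
  Cofork.IsColimit.π_desc' (isColimitMapPresentation H M) _ _

lemma extendApp_naturality (he : ∀ s : End (of R R), H.map s ≫ e = e ≫ H.map s)
    {M N : ModuleCat.{v} R} (f : M ⟶ N) :
    H.map f ≫ extendApp H he N = extendApp H he M ≫ H.map f := by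
  obtain ⟨φ, hφ⟩ := exists_lift_presentation f
  apply map_presentation_hom_ext H
  calc H.map (ofHom (presentation M).π) ≫ H.map f ≫ extendApp H he N
      = H.map φ ≫ H.map (ofHom (presentation N).π) ≫ extendApp H he N := by
        rw [← Category.assoc, ← H.map_comp, ← hφ, H.map_comp, Category.assoc]
    _ = extendToFree H e _ ≫ H.map φ ≫ H.map (ofHom (presentation N).π) := by
        rw [map_π_comp_extendApp, ← Category.assoc, map_comp_extendToFree H he, Category.assoc]
    _ = H.map (ofHom (presentation M).π) ≫ extendApp H he M ≫ H.map f := by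
        rw [← H.map_comp, hφ, H.map_comp, ← Category.assoc, ← map_π_comp_extendApp H he,
          Category.assoc]

def natTransOfCommute (he : ∀ s : End (of R R), H.map s ≫ e = e ≫ H.map s) : H ⟶ H where
  app := extendApp H he
  naturality _ _ f := extendApp_naturality H he f

lemma natTransOfCommute_app_unit (he : ∀ s : End (of R R), H.map s ≫ e = e ≫ H.map s) :
    (natTransOfCommute H he).app (of R R) = e :=
  map_presentation_hom_ext H ((map_π_comp_extendApp H he _).trans
    (map_comp_eq_extendToFree_comp_map H he _).symm)

end Centralizer

end ModuleCat

theorem functor_endomorphisms_eq_centralizer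
    (B : Type w) [Category.{w₂} B] [Abelian B]
    (H : ModuleCat.{v} R ⥤ B) [H.Additive]
    [Limits.PreservesColimits H] :
    Function.Injective (fun η : H ⟶ H => η.app (ModuleCat.of R R)) ∧
    Set.range (fun η : H ⟶ H => η.app (ModuleCat.of R R))
      = {e : End (H.obj (ModuleCat.of R R)) |
          ∀ s : End (ModuleCat.of R R), H.map s ≫ e = e ≫ H.map s} := by
  have range_subset : Set.range (fun η : H ⟶ H => η.app (ModuleCat.of R R)) ⊆
      {e | ∀ s : End (ModuleCat.of R R), H.map s ≫ e = e ≫ H.map s} := by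
    rintro _ ⟨η, rfl⟩ s
    exact η.naturality s
  by_cases hv : UnivLE.{v, w₂}
  · have : PreservesColimitsOfSize.{v, v} H := preservesColimitsOfSize_of_univLE H
    exact ⟨fun _ _ => ModuleCat.natTrans_ext_of_app_unit H, range_subset.antisymm fun e he =>
      ⟨ModuleCat.natTransOfCommute H he, ModuleCat.natTransOfCommute_app_unit H he⟩⟩
  · obtain ⟨ι, hι⟩ : ∃ ι : Type v, ¬ Small.{w₂} ι := by simpa [univLE_iff] using hv
    have hzero := ModuleCat.isZero_obj_of_not_small H hι
    have eq_of_zero (η η' : H ⟶ H) : η = η' := by ext M; exact (hzero M).eq_of_src _ _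
    exact ⟨fun η η' _ => eq_of_zero η η', range_subset.antisymm fun _ _ =>
      ⟨𝟙 H, (hzero _).eq_of_src _ _⟩⟩

end
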